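/- arXiv:2308.07409 — 2 statements merged into one kernel-verified Lean document; each statement's English description precedes it below -/
import Mathlib

section
/- Let A ⊆ ℝⁿ be finite with convex hull Q, η : A → ℝ, f_η(u) = min_{a∈A}(⟨u,a⟩+η(a)), and g_η as defined via the upper boundary of conv{(a,s) : a ∈ A, s ≤ −η(a)}. Then for all v ∈ Q, −g_η(v) = sup_{u ∈ ℝⁿ} ( f_η(u) − ⟨u, v⟩ ), and this supremum is attained. -/
open scoped RealInnerProductSpace

section Cone

variable {V : Type*} [NormedAddCommGroup V] [InnerProductSpace ℝ V] [FiniteDimensional ℝ V]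
variable {κ : Type*} [DecidableEq κ]

/-- The cone of nonnegative combinations of `f i`, `i ∈ t`. -/
def coneOf (f : κ → V) (t : Finset κ) : Set V :=
  {x | ∃ μ : κ → ℝ, (∀ i, 0 ≤ μ i) ∧ ∑ i ∈ t, μ i • f i = x}

lemma coneOf_carath (f : κ → V) (t : Finset κ) :
    ∀ x ∈ coneOf f t, ∃ t' ⊆ t,
      LinearIndependent ℝ (fun i : {i // i ∈ t'} => f i) ∧ x ∈ coneOf f t' := by
  classical
  induction t using Finset.strongInduction with
  | _ t ih =>
  rintro x ⟨μ, hμ0, hμs⟩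
  by_cases hind : LinearIndependent ℝ (fun i : {i // i ∈ t} => f (i : κ))
  · exact ⟨t, subset_rfl, hind, μ, hμ0, hμs⟩
  · obtain ⟨g, hgsum, i₀, hgpos⟩ :
        ∃ g : {i // i ∈ t} → ℝ, (∑ i, g i • f i = 0) ∧ ∃ i, 0 < g i := by
      obtain ⟨g, h1, i₀, h2⟩ := Fintype.not_linearIndependent_iff.1 hind
      rcases h2.lt_or_gt with h | h
      · refine ⟨-g, ?_, i₀, by simpa using h⟩
        simp only [Pi.neg_apply, neg_smul, Finset.sum_neg_distrib, h1, neg_zero]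
      · exact ⟨g, h1, i₀, h⟩
    set ν : κ → ℝ := fun j => if h : j ∈ t then g ⟨j, h⟩ else 0 with hν
    have hνsum : ∑ j ∈ t, ν j • f j = 0 := by
      rw [← Finset.sum_attach t (fun j => ν j • f j)]
      rw [← hgsum, ← Finset.univ_eq_attach]
      refine Finset.sum_congr rfl fun i _ => ?_
      simp [hν]
    have hi₀t : (i₀ : κ) ∈ t := i₀.2
    have hνi₀ : 0 < ν i₀ := by simpa [hν, hi₀t] using hgpos
    set P : Finset κ := t.filter (fun j => 0 < ν j) with hP
    have hPne : P.Nonempty := ⟨i₀, Finset.mem_filter.2 ⟨hi₀t, hνi₀⟩⟩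
    obtain ⟨j₀, hj₀P, hj₀⟩ := Finset.exists_mem_eq_inf' hPne (fun j => μ j / ν j)
    set τ : ℝ := P.inf' hPne (fun j => μ j / ν j) with hτ
    have hνj₀ : 0 < ν j₀ := (Finset.mem_filter.1 hj₀P).2
    have hj₀t : j₀ ∈ t := (Finset.mem_filter.1 hj₀P).1
    have hτ0 : 0 ≤ τ := by
      apply Finset.le_inf'
      intro j hj
      exact div_nonneg (hμ0 j) (le_of_lt (Finset.mem_filter.1 hj).2)
    set μ' : κ → ℝ := fun j => μ j - τ * ν j with hμ'
    have hμ'0 : ∀ j, 0 ≤ μ' j := by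
      intro j
      by_cases hjν : 0 < ν j
      · by_cases hjt : j ∈ t
        · have hjP : j ∈ P := Finset.mem_filter.2 ⟨hjt, hjν⟩
          have := Finset.inf'_le (fun j => μ j / ν j) hjP
          rw [← hτ] at this
          have : τ * ν j ≤ μ j := by
            rw [← le_div_iff₀ hjν] at *
            exact this
          simpa [hμ'] using this
        · exfalso
          simp only [hν, dif_neg hjt] at hjν
          exact lt_irrefl 0 hjν
      · push_neg at hjν
        have h1 : τ * ν j ≤ 0 := mul_nonpos_of_nonneg_of_nonpos hτ0 hjν
        have := hμ0 j
        simp only [hμ']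
        linarith
    have hμ'j₀ : μ' j₀ = 0 := by
      simp only [hμ', hj₀, hτ]
      field_simp
      ring
    have hsum' : ∑ j ∈ t, μ' j • f j = x := by
      simp only [hμ', sub_smul, Finset.sum_sub_distrib, mul_smul]
      rw [← Finset.smul_sum, hνsum, smul_zero, sub_zero, hμs]
    have hx' : x ∈ coneOf f (t.erase j₀) := by
      refine ⟨μ', hμ'0, ?_⟩
      rw [Finset.sum_erase _ (by rw [hμ'j₀]; exact zero_smul _ _)]
      exact hsum'
    obtain ⟨t', ht'sub, ht'ind, ht'x⟩ := ih (t.erase j₀) (Finset.erase_ssubset hj₀t) x hx'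
    exact ⟨t', ht'sub.trans (Finset.erase_subset _ _), ht'ind, ht'x⟩

lemma coneOf_isClosed_of_indep (f : κ → V) (t : Finset κ)
    (h : LinearIndependent ℝ (fun i : {i // i ∈ t} => f i)) :
    IsClosed (coneOf f t) := by
  classical
  let φ : ({i // i ∈ t} → ℝ) →ₗ[ℝ] V :=
    { toFun := fun g => ∑ i, g i • f i
      map_add' := by
        intro g₁ g₂
        simp [add_smul, Finset.sum_add_distrib]
      map_smul' := by
        intro c g
        simp [mul_smul, Finset.smul_sum] }
  have hker : LinearMap.ker φ = ⊥ := by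
    rw [LinearMap.ker_eq_bot']
    intro g hg
    have := Fintype.linearIndependent_iff.1 h g hg
    funext i
    exact this i
  have hemb := LinearMap.isClosedEmbedding_of_injective hker
  have horth : IsClosed {g : {i // i ∈ t} → ℝ | ∀ i, 0 ≤ g i} := by
    have : {g : {i // i ∈ t} → ℝ | ∀ i, 0 ≤ g i} = ⋂ i, {g | 0 ≤ g i} := by
      ext g; simp [Set.mem_iInter]
    rw [this]
    exact isClosed_iInter fun i => isClosed_le continuous_const (continuous_apply i)
  have himg := hemb.isClosedMap _ horth
  have heq : coneOf f t = φ '' {g | ∀ i, 0 ≤ g i} := by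
    ext x
    constructor
    · rintro ⟨μ, h0, hs⟩
      refine ⟨fun i => μ i, fun i => h0 i, ?_⟩
      show ∑ i : {i // i ∈ t}, μ (i : κ) • f (i : κ) = x
      rw [Finset.univ_eq_attach, Finset.sum_attach t (fun j => μ j • f j)]
      exact hs
    · rintro ⟨g, hg, rfl⟩
      refine ⟨fun j => if h : j ∈ t then g ⟨j, h⟩ else 0, ?_, ?_⟩
      · intro j
        by_cases h : j ∈ t
        · simpa [h] using hg ⟨j, h⟩
        · simp [h]
      · show _ = ∑ i, g i • f i
        rw [← Finset.sum_attach t (fun j => (if h : j ∈ t then g ⟨j, h⟩ else 0) • f j),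
          ← Finset.univ_eq_attach]
        refine Finset.sum_congr rfl fun i _ => ?_
        simp
  rw [heq]
  exact himg

lemma coneOf_isClosed (f : κ → V) (t : Finset κ) : IsClosed (coneOf f t) := by
  classical
  have heq : coneOf f t = ⋃ t' ∈ {t' : Finset κ | t' ⊆ t ∧
      LinearIndependent ℝ (fun i : {i // i ∈ t'} => f i)}, coneOf f t' := by
    ext x
    simp only [Set.mem_iUnion, exists_prop, Set.mem_setOf_eq]
    constructor
    · intro hx
      obtain ⟨t', h1, h2, h3⟩ := coneOf_carath f t x hx
      exact ⟨t', ⟨h1, h2⟩, h3⟩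
    · rintro ⟨t', ⟨h1, _⟩, μ, h0, hs⟩
      refine ⟨fun j => if j ∈ t' then μ j else 0, fun j => ?_, ?_⟩
      · by_cases hj : j ∈ t' <;> simp [hj, h0 j]
      · rw [← hs, ← Finset.sum_subset h1 (fun j _ hj => by simp [hj])]
        exact Finset.sum_congr rfl fun j hj => by simp [hj]
  rw [heq]
  refine Set.Finite.isClosed_biUnion ?_ fun t' ht' => coneOf_isClosed_of_indep f t' ht'.2
  exact (t.powerset.finite_toSet).subset fun t' ht' => by
    simpa [Finset.mem_powerset] using ht'.1

end Cone

theorem stmt17 (n : ℕ) (A : Finset (EuclideanSpace ℝ (Fin n))) (hA : A.Nonempty)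
    (η : EuclideanSpace ℝ (Fin n) → ℝ)
    (Qη : Set (EuclideanSpace ℝ (Fin n) × ℝ))
    (hQη : Qη = convexHull ℝ
      {p : EuclideanSpace ℝ (Fin n) × ℝ | ∃ a ∈ A, p.1 = a ∧ p.2 ≤ -η a}) :
    ∀ v ∈ convexHull ℝ (A : Set (EuclideanSpace ℝ (Fin n))),
      IsGreatest
        {y : ℝ | ∃ u : EuclideanSpace ℝ (Fin n),
          y = A.inf' hA (fun a => ⟪u, a⟫ + η a) - ⟪u, v⟫}
        (-(sSup {s : ℝ | (v, s) ∈ Qη})) := by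
  classical
  intro v hv
  rw [Finset.convexHull_eq] at hv
  obtain ⟨w₀, hw₀0, hw₀1, hw₀c⟩ := hv
  rw [Finset.centerMass_eq_of_sum_1 _ _ hw₀1] at hw₀c
  simp only [id_eq] at hw₀c
  -- the compact set of weight vectors representing v
  set D : Set ({a // a ∈ A} → ℝ) :=
    {w | (∀ i, 0 ≤ w i) ∧ ∑ i, w i = 1 ∧
      ∑ i, w i • (i : EuclideanSpace ℝ (Fin n)) = v} with hD
  have hDne : D.Nonempty := by
    refine ⟨fun i => w₀ i, fun i => hw₀0 i i.2, ?_, ?_⟩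
    · rw [Finset.univ_eq_attach, Finset.sum_attach A w₀]; exact hw₀1
    · rw [Finset.univ_eq_attach, Finset.sum_attach A (fun a => w₀ a • a)]; exact hw₀c
  have hDsub : D ⊆ stdSimplex ℝ {a // a ∈ A} := fun w hw => ⟨hw.1, hw.2.1⟩
  have hDcl : IsClosed D := by
    have heq : D = (⋂ i, {w : {a // a ∈ A} → ℝ | 0 ≤ w i}) ∩
        ({w | ∑ i, w i = 1} ∩
         {w | ∑ i, w i • (i : EuclideanSpace ℝ (Fin n)) = v}) := by
      ext w
      simp only [hD, Set.mem_setOf_eq, Set.mem_inter_iff, Set.mem_iInter]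
    rw [heq]
    refine IsClosed.inter (isClosed_iInter fun i =>
      isClosed_le continuous_const (continuous_apply i)) (IsClosed.inter ?_ ?_)
    · exact isClosed_eq (continuous_finset_sum _ fun i _ => continuous_apply i)
        continuous_const
    · exact isClosed_eq (continuous_finset_sum _ fun i _ =>
        (continuous_apply i).smul continuous_const) continuous_const
  have hDcp : IsCompact D := (isCompact_stdSimplex ℝ _).of_isClosed_subset hDcl hDsub
  obtain ⟨wm, hwmD, hwmax⟩ := hDcp.exists_isMaxOn hDne
    (f := fun w => ∑ i, w i * (-η (i : EuclideanSpace ℝ (Fin n))))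
    (Continuous.continuousOn (continuous_finset_sum _ fun i _ =>
      (continuous_apply i).mul continuous_const))
  obtain ⟨hwm0, hwm1, hwmv⟩ := hwmD
  set G : ℝ := ∑ i, wm i * (-η (i : EuclideanSpace ℝ (Fin n))) with hG
  set S : Set ℝ := {s | (v, s) ∈ Qη} with hS
  -- upper bound claim
  have hub : ∀ u : EuclideanSpace ℝ (Fin n), ∀ s ∈ S,
      s ≤ ⟪u, v⟫ - A.inf' hA (fun a => ⟪u, a⟫ + η a) := by
    intro u s hs
    have hlin : IsLinearMap ℝ (fun p : EuclideanSpace ℝ (Fin n) × ℝ => ⟪u, p.1⟫ - p.2) := by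
      constructor
      · intro p q
        simp only [Prod.fst_add, Prod.snd_add, inner_add_right]
        ring
      · intro c p
        simp only [Prod.smul_fst, Prod.smul_snd, inner_smul_right, smul_eq_mul]
        ring
    have hconv := convex_halfSpace_ge hlin (A.inf' hA (fun a => ⟪u, a⟫ + η a))
    have hsub : {p : EuclideanSpace ℝ (Fin n) × ℝ | ∃ a ∈ A, p.1 = a ∧ p.2 ≤ -η a} ⊆
        {p | A.inf' hA (fun a => ⟪u, a⟫ + η a) ≤ ⟪u, p.1⟫ - p.2} := by
      rintro p ⟨a, haA, hp1, hp2⟩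
      have h1 : A.inf' hA (fun a => ⟪u, a⟫ + η a) ≤ ⟪u, a⟫ + η a :=
        Finset.inf'_le _ haA
      have h2 : ⟪u, a⟫ + η a ≤ ⟪u, p.1⟫ - p.2 := by rw [hp1]; linarith
      exact le_trans h1 h2
    have hmin := convexHull_min hsub hconv
    rw [← hQη] at hmin
    have h2 := hmin hs
    simp only [Set.mem_setOf_eq] at h2
    linarith
  -- G is in S
  have hGS : G ∈ S := by
    show (v, G) ∈ Qη
    rw [hQη]
    have hmem : ∀ i : {a // a ∈ A},
        ((i : EuclideanSpace ℝ (Fin n)), -η (i : EuclideanSpace ℝ (Fin n))) ∈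
          {p : EuclideanSpace ℝ (Fin n) × ℝ | ∃ a ∈ A, p.1 = a ∧ p.2 ≤ -η a} :=
      fun i => ⟨i, i.2, rfl, le_refl _⟩
    have hsum := (convex_convexHull ℝ
        {p : EuclideanSpace ℝ (Fin n) × ℝ | ∃ a ∈ A, p.1 = a ∧ p.2 ≤ -η a}).sum_mem
      (t := Finset.univ) (fun i _ => hwm0 i) hwm1
      (fun i _ => subset_convexHull ℝ _ (hmem i))
    have heq : ∑ i, wm i • ((i : EuclideanSpace ℝ (Fin n)),
        -η (i : EuclideanSpace ℝ (Fin n))) = (v, G) := by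
      refine Prod.ext ?_ ?_
      · rw [Prod.fst_sum]
        simpa using hwmv
      · rw [Prod.snd_sum]
        simp [hG, smul_eq_mul]
    rw [heq] at hsum
    exact hsum
  -- Farkas: existence of a dual vector u
  haveI hfd : FiniteDimensional ℝ (WithLp 2 (EuclideanSpace ℝ (Fin n) × ℝ)) :=
    Module.Finite.equiv (WithLp.linearEquiv 2 ℝ (EuclideanSpace ℝ (Fin n) × ℝ)).symm
  haveI : CompleteSpace (WithLp 2 (EuclideanSpace ℝ (Fin n) × ℝ)) :=
    inferInstance
  set L := WithLp.linearEquiv 2 ℝ (EuclideanSpace ℝ (Fin n) × ℝ) with hLdef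
  set ω : {a // a ∈ A} → WithLp 2 (EuclideanSpace ℝ (Fin n) × ℝ) :=
    fun i => L.symm ((i : EuclideanSpace ℝ (Fin n)) - v, η (i : EuclideanSpace ℝ (Fin n)) + G)
    with hω
  let K : ConvexCone ℝ (WithLp 2 (EuclideanSpace ℝ (Fin n) × ℝ)) :=
    { carrier := coneOf ω Finset.univ
      smul_mem' := by
        rintro c hc x ⟨μ, hμ0, hμs⟩
        exact ⟨fun i => c * μ i, fun i => mul_nonneg hc.le (hμ0 i), by
          simp only [mul_smul]
          rw [← Finset.smul_sum, hμs]⟩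
      add_mem' := by
        rintro x ⟨μ, hμ0, hμs⟩ y ⟨ν, hν0, hνs⟩
        exact ⟨fun i => μ i + ν i, fun i => add_nonneg (hμ0 i) (hν0 i), by
          simp only [add_smul, Finset.sum_add_distrib, hμs, hνs]⟩ }
  have hKne : (K : Set (WithLp 2 (EuclideanSpace ℝ (Fin n) × ℝ))).Nonempty :=
    ⟨0, ⟨fun _ => 0, fun _ => le_refl 0, by simp⟩⟩
  have hKcl : IsClosed (K : Set (WithLp 2 (EuclideanSpace ℝ (Fin n) × ℝ))) :=
    coneOf_isClosed ω Finset.univ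
  have hbnot : L.symm ((0 : EuclideanSpace ℝ (Fin n)), (-1 : ℝ)) ∉ K := by
    rintro ⟨μ, hμ0, hμs⟩
    have h1 : ∑ i, μ i • ((i : EuclideanSpace ℝ (Fin n)) - v,
        η (i : EuclideanSpace ℝ (Fin n)) + G) =
        ((0 : EuclideanSpace ℝ (Fin n)), (-1 : ℝ)) := by
      have h2 := congrArg L hμs
      rw [map_sum] at h2
      simp only [map_smul, hω, LinearEquiv.apply_symm_apply] at h2
      exact h2
    have hfst : ∑ i, μ i • ((i : EuclideanSpace ℝ (Fin n)) - v) = 0 := by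
      have := congrArg Prod.fst h1
      simpa [Prod.fst_sum] using this
    have hsnd : ∑ i, μ i * (η (i : EuclideanSpace ℝ (Fin n)) + G) = -1 := by
      have := congrArg Prod.snd h1
      simpa [Prod.snd_sum, smul_eq_mul] using this
    set M : ℝ := ∑ i, μ i with hM
    have hM0 : 0 ≤ M := Finset.sum_nonneg fun i _ => hμ0 i
    have hMpos : 0 < M := by
      rcases hM0.lt_or_eq with h | h
      · exact h
      · exfalso
        have hz : ∀ i ∈ Finset.univ, μ i = 0 :=
          (Finset.sum_eq_zero_iff_of_nonneg (fun i _ => hμ0 i)).1 h.symm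
        have hcontra : (-1 : ℝ) = 0 := by
          rw [← hsnd]
          exact Finset.sum_eq_zero fun i hi => by rw [hz i hi, zero_mul]
        norm_num at hcontra
    have hsv : ∑ i, μ i • (i : EuclideanSpace ℝ (Fin n)) = M • v := by
      have hexp : ∑ i, μ i • ((i : EuclideanSpace ℝ (Fin n)) - v) =
          ∑ i, μ i • (i : EuclideanSpace ℝ (Fin n)) - M • v := by
        simp only [smul_sub, Finset.sum_sub_distrib, hM, Finset.sum_smul]
      rw [hexp] at hfst
      have := sub_eq_zero.1 hfst
      exact this
    have hDmem : (fun i => μ i / M) ∈ D := by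
      refine ⟨fun i => div_nonneg (hμ0 i) hM0, ?_, ?_⟩
      · rw [← Finset.sum_div, ← hM]
        field_simp
      · have : ∑ i, (μ i / M) • (i : EuclideanSpace ℝ (Fin n)) =
            M⁻¹ • ∑ i, μ i • (i : EuclideanSpace ℝ (Fin n)) := by
          rw [Finset.smul_sum]
          exact Finset.sum_congr rfl fun i _ => by
            rw [div_eq_inv_mul, mul_smul]
        rw [this, hsv, smul_smul, inv_mul_cancel₀ hMpos.ne', one_smul]
    have hval : ∑ i, (μ i / M) * (-η (i : EuclideanSpace ℝ (Fin n))) = G + M⁻¹ := by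
      have h2 : ∑ i, μ i * (-η (i : EuclideanSpace ℝ (Fin n))) = M * G + 1 := by
        have h3 : ∑ i, μ i * (η (i : EuclideanSpace ℝ (Fin n)) + G) =
            ∑ i, μ i * η (i : EuclideanSpace ℝ (Fin n)) + M * G := by
          simp only [mul_add, Finset.sum_add_distrib, hM, Finset.sum_mul]
        rw [h3] at hsnd
        have h4 : ∑ i, μ i * (-η (i : EuclideanSpace ℝ (Fin n))) =
            -∑ i, μ i * η (i : EuclideanSpace ℝ (Fin n)) := by
          simp [Finset.sum_neg_distrib]
        rw [h4]
        linarith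
      calc ∑ i, (μ i / M) * (-η (i : EuclideanSpace ℝ (Fin n)))
          = M⁻¹ * ∑ i, μ i * (-η (i : EuclideanSpace ℝ (Fin n))) := by
            rw [Finset.mul_sum]
            exact Finset.sum_congr rfl fun i _ => by ring
        _ = G + M⁻¹ := by
            rw [h2]
            field_simp
    have hle : ∑ i, (μ i / M) * (-η (i : EuclideanSpace ℝ (Fin n))) ≤
        ∑ i, wm i * (-η (i : EuclideanSpace ℝ (Fin n))) := hwmax hDmem
    rw [hval, ← hG] at hle
    have hMinv : 0 < M⁻¹ := inv_pos.2 hMpos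
    linarith
  obtain ⟨y, hy1, hy2⟩ :=
    ProperCone.hyperplane_separation' (C := { toSubmodule := (K.toPointedCone
      ⟨fun _ => 0, fun _ => le_refl 0, by simp⟩), isClosed' := hKcl }) hbnot
  have hinner : ∀ p q : EuclideanSpace ℝ (Fin n) × ℝ,
      ⟪L.symm p, L.symm q⟫ = ⟪p.1, q.1⟫ + p.2 * q.2 := by
    intro p q
    rw [WithLp.prod_inner_apply]
    simp [hLdef, mul_comm]
  have hysnd : 0 < (L y).2 := by
    have hy2' := hy2
    rw [show y = L.symm (L y) from (L.symm_apply_apply y).symm, hinner] at hy2'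
    simp only [inner_zero_left] at hy2'
    nlinarith
  have hgen : ∀ i : {a // a ∈ A},
      0 ≤ ⟪(i : EuclideanSpace ℝ (Fin n)) - v, (L y).1⟫
        + (η (i : EuclideanSpace ℝ (Fin n)) + G) * (L y).2 := by
    intro i
    have hmem : ω i ∈ K := by
      refine ⟨fun j => if j = i then 1 else 0, fun j => ?_, ?_⟩
      · by_cases h : j = i <;> simp [h]
      · simp [ite_smul]
    have h0 : 0 ≤ ⟪L.symm ((i : EuclideanSpace ℝ (Fin n)) - v,
        η (i : EuclideanSpace ℝ (Fin n)) + G), L.symm (L y)⟫ := by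
      rw [L.symm_apply_apply]
      exact hy1 _ hmem
    rw [hinner] at h0
    exact h0
  set u : EuclideanSpace ℝ (Fin n) := ((L y).2)⁻¹ • (L y).1 with hu
  have hkey : ∀ a ∈ A, ⟪u, v⟫ - G ≤ ⟪u, a⟫ + η a := by
    intro a ha
    have h0 := hgen ⟨a, ha⟩
    simp only at h0
    have h1 : ⟪u, a⟫ - ⟪u, v⟫ = ((L y).2)⁻¹ * ⟪a - v, (L y).1⟫ := by
      rw [← inner_sub_right, hu, real_inner_smul_left, real_inner_comm]
    have h2 : (L y).2 * (-(η a + G)) ≤ ⟪a - v, (L y).1⟫ := by nlinarith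
    have h3 := mul_le_mul_of_nonneg_left h2 (inv_nonneg.2 hysnd.le)
    rw [inv_mul_cancel_left₀ hysnd.ne'] at h3
    linarith
  have hle1 : ⟪u, v⟫ - G ≤ A.inf' hA (fun a => ⟪u, a⟫ + η a) :=
    Finset.le_inf' hA _ hkey
  have hle2 : G ≤ ⟪u, v⟫ - A.inf' hA (fun a => ⟪u, a⟫ + η a) := hub u G hGS
  have hSgreat : IsGreatest S G := ⟨hGS, fun s hs => by have h := hub u s hs; linarith⟩
  have hsup : sSup S = G := hSgreat.csSup_eq
  constructor
  · exact ⟨u, by rw [hsup]; linarith⟩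
  · rintro z ⟨u', rfl⟩
    have h := hub u' G hGS
    rw [hsup]
    linarith
end

section
/- Let T be a finite rooted tree where each node is colored red, purple, or blue, and suppose the coloring is monotone: along every directed path from root to leaf, colors weakly decrease in the order red > purple > blue. Assign every edge e from node p to node q (directed away from the root) a length ℓ(e): ℓ(e) = 1/m if q is red, ℓ(e) = 1 − δ(e)/m if q is purple, ℓ(e) = 2 if q is blue, where δ(e) is the number of edges on the path from the root node to p and m exceeds the total number of edges. Then for every node v other than the root, letting D(v) denote the sum of ℓ over the edges on the path from the root to v: D(v) < 1 if v is red, D(v) = 1 if v is purple, and D(v) > 1 if v is blue. -/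
theorem stmt19 {V : Type} [Fintype V] (r : V) (par : V → V) (depth : V → ℕ)
    (hpr : par r = r) (hd0 : depth r = 0)
    (hds : ∀ v, v ≠ r → depth v = depth (par v) + 1)
    (κ : V → Fin 3)
    (hκr : κ r = 2)
    (hmono : ∀ v, v ≠ r → κ v ≤ κ (par v))
    (hpurple : ∀ v, v ≠ r → κ v = 1 → κ (par v) = 2)
    (m : ℕ) (hm : Fintype.card V - 1 < m)
    (ℓ : V → ℝ)
    (hℓ : ∀ v, v ≠ r → ℓ v =
      if κ v = 2 then 1 / (m : ℝ)
      else if κ v = 1 then 1 - ((depth v : ℝ) - 1) / (m : ℝ)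
      else 2)
    (D : V → ℝ) (hD0 : D r = 0) (hDs : ∀ v, v ≠ r → D v = D (par v) + ℓ v) :
    ∀ v, v ≠ r →
      (κ v = 2 → D v < 1) ∧ (κ v = 1 → D v = 1) ∧ (κ v = 0 → 1 < D v) := by
  -- depth is bounded by m
  have hdepth_lt : ∀ v : V, depth v < m := by
    intro v
    have key : ∀ k ≤ depth v, depth (par^[k] v) = depth v - k := by
      intro k hk
      induction k with
      | zero => simp
      | succ n ih =>
        have h1 := ih (Nat.le_of_succ_le hk)
        by_cases hr : par^[n] v = r
        · exfalso
          rw [hr, hd0] at h1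
          omega
        · rw [Function.iterate_succ_apply']
          have := hds _ hr
          omega
    have hinj : Function.Injective (fun k : Fin (depth v + 1) => par^[(k : ℕ)] v) := by
      intro a b hab
      have ha := key a (Nat.lt_succ_iff.mp a.isLt)
      have hb := key b (Nat.lt_succ_iff.mp b.isLt)
      have hda : depth v - (a : ℕ) = depth v - (b : ℕ) := by
        rw [← ha, ← hb]
        simpa using congrArg depth hab
      have := a.isLt
      have := b.isLt
      exact Fin.ext (by omega)
    have hcard := Fintype.card_le_of_injective _ hinj
    simp only [Fintype.card_fin] at hcard
    omega
  have hm0 : 0 < m := lt_of_le_of_lt (Nat.zero_le _) (hdepth_lt r)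
  have hmR : (0 : ℝ) < (m : ℝ) := by exact_mod_cast hm0
  have main : ∀ n : ℕ, ∀ v, depth v ≤ n →
      (κ v = 2 → D v = (depth v : ℝ) / m) ∧ (v ≠ r → κ v = 1 → D v = 1) ∧ 0 ≤ D v := by
    intro n
    induction n with
    | zero =>
      intro v hv
      have hvr : v = r := by
        by_contra h
        have := hds v h
        omega
      subst hvr
      rw [hD0, hd0]
      exact ⟨fun _ => by simp, fun h _ => absurd rfl h, le_refl 0⟩
    | succ n ih =>
      intro v hv
      by_cases hvr : v = r
      · subst hvr
        rw [hD0, hd0]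
        exact ⟨fun _ => by simp, fun h _ => absurd rfl h, le_refl 0⟩
      · have hdv := hds v hvr
        have hdp : depth (par v) ≤ n := by omega
        obtain ⟨ih1, _, ih3⟩ := ih (par v) hdp
        have hDv := hDs v hvr
        have hℓv := hℓ v hvr
        have hdlt := hdepth_lt v
        have hd1 : 1 ≤ depth v := by omega
        refine ⟨?_, ?_, ?_⟩
        · intro h2
          have hle : (2 : Fin 3) ≤ κ (par v) := h2 ▸ hmono v hvr
          have hlt := (κ (par v)).isLt
          have hp2 : κ (par v) = 2 := by
            have := Fin.le_def.mp hle
            exact Fin.ext (by omega)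
          rw [hDv, hℓv, if_pos h2, ih1 hp2]
          have : (depth v : ℝ) = (depth (par v) : ℝ) + 1 := by exact_mod_cast hdv
          rw [this]
          field_simp
        · intro _ h1
          have hp2 : κ (par v) = 2 := hpurple v hvr h1
          have h12 : κ v ≠ 2 := by rw [h1]; decide
          rw [hDv, hℓv, if_neg h12, if_pos h1, ih1 hp2]
          have : (depth v : ℝ) = (depth (par v) : ℝ) + 1 := by exact_mod_cast hdv
          rw [this]
          field_simp
          ring
        · rw [hDv, hℓv]
          have hℓnn : (0 : ℝ) ≤ (if κ v = 2 then 1 / (m : ℝ)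
              else if κ v = 1 then 1 - ((depth v : ℝ) - 1) / (m : ℝ) else 2) := by
            split_ifs with h2 h1
            · positivity
            · have hle : ((depth v : ℝ) - 1) / (m : ℝ) ≤ 1 := by
                rw [div_le_one hmR]
                have : (depth v : ℝ) ≤ (m : ℝ) := by exact_mod_cast hdlt.le
                linarith
              linarith
            · norm_num
          linarith [ih3]
  intro v hvr
  obtain ⟨h2, h1, _⟩ := main (depth v) v le_rfl
  have hdv := hds v hvr
  have hdlt := hdepth_lt v
  refine ⟨?_, h1 hvr, ?_⟩
  · intro hk
    rw [h2 hk, div_lt_one hmR]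
    exact_mod_cast hdlt
  · intro hk
    have h02 : κ v ≠ 2 := by rw [hk]; decide
    have h01 : κ v ≠ 1 := by rw [hk]; decide
    have hDv := hDs v hvr
    have hℓv := hℓ v hvr
    rw [if_neg h02, if_neg h01] at hℓv
    obtain ⟨_, _, hnn⟩ := main (depth (par v)) (par v) le_rfl
    rw [hDv, hℓv]
    linarith
end
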